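/- arXiv:2306.14524 — 4 statements merged into one kernel-verified Lean document; each statement's English description precedes it below -/
import Mathlib

section
/- Let f : ℝ → ℝ be continuous and 2π-periodic with f(0) = 1 and f(ξ)² + f(ξ+π)² ≤ 1 for all ξ ∈ ℝ, and let ε > 0. Then there exists a continuous 2π-periodic function g : ℝ → ℝ such that: (i) g(0) = 1; (ii) sup_{ξ ∈ ℝ} |f(ξ) − g(ξ)| < ε; (iii) g(ξ)² + g(ξ+π)² ≤ 1 for all ξ ∈ ℝ; (iv) g has only finitely many zeros in [0, 2π); (v) g has no pair of symmetric roots; and (vi) g has no nontrivial cycle. -/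
open scoped BigOperators

/-- `b : Fin n → ℂ` is a cycle of the `2π`-periodic function `g`: the `b j` are distinct
unimodular complex numbers, `b (j+1) = (b j)^2` cyclically (so `b (n-1) ^ 2 = b 0`), and
writing `b j = e^{iβ_j}` we have `g (β_j + π) = 0`. -/
def IsCycleOf (g : ℝ → ℝ) {n : ℕ} (b : Fin n → ℂ) : Prop :=
  0 < n ∧ Function.Injective b ∧ (∀ j, ‖b j‖ = 1) ∧
    (∀ (j : ℕ) (hj : j < n),
      b ⟨(j + 1) % n, Nat.mod_lt _ (Nat.zero_lt_of_lt hj)⟩ = b ⟨j, hj⟩ ^ 2) ∧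
    ∀ j : Fin n, ∃ β : ℝ, b j = Complex.exp (β * Complex.I) ∧ g (β + Real.pi) = 0

/-- `g` has a nontrivial cycle, i.e. a cycle different from `{1}`. -/
def HasNontrivialCycle (g : ℝ → ℝ) : Prop :=
  ∃ (n : ℕ) (b : Fin n → ℂ), IsCycleOf g b ∧ Set.range b ≠ {1}

/-!
First `f` is replaced by a function `r` that is piecewise linear on the grid `(π / M) ℤ`, with one
extra node inside each cell. At a grid point `r` takes the value of `f` pushed at least `τ` away
from `0`, except on `π + 2πℤ`, where `f` and `r` vanish; at the extra node of a cell `r` vanishes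
when the two grid values have strictly opposite signs and is pushed to their common sign otherwise.
So `r` vanishes only on `π + 2πℤ` and at extra nodes, and these are placed at irrational multiples
of `π`, never two of them `π` apart. This excludes symmetric roots, and it excludes nontrivial
cycles because a cycle point `e^{iβ}` satisfies `e^{i(2ⁿ-1)β} = 1`, so `β ∈ πℚ`.

Then `g = r / max 1 √(r ξ ^ 2 + r (ξ + π) ^ 2)` satisfies `g ξ ^ 2 + g (ξ + π) ^ 2 ≤ 1`, has the
zeros of `r`, and is close to `r` because `r` is close to `f`, which satisfies that constraint.
-/

open Set Function AffineMap Real Filter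

theorem Function.Periodic.uniformContinuous_of_continuous {α : Type*} [UniformSpace α]
    {f : ℝ → α} {c : ℝ} (hp : Periodic f c) (hc : 0 < c) (hf : Continuous f) :
    UniformContinuous f := by
  have : Fact (0 < c) := ⟨hc⟩
  have hlift : Continuous hp.lift := continuous_coinduced_dom.2 hf
  exact (CompactSpace.uniformContinuous_of_continuous hlift).comp
    (uniformContinuous_addMonoidHom_of_continuous
      (f := QuotientAddGroup.mk' (AddSubgroup.zmultiples c)) continuous_quotient_mk')

theorem pow_two_pow_eq_self_of_sq_succ {α : Type*} [Monoid α] {n : ℕ} {b : Fin n → α}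
    (hsq : ∀ (j : ℕ) (hj : j < n),
      b ⟨(j + 1) % n, Nat.mod_lt _ (Nat.zero_lt_of_lt hj)⟩ = b ⟨j, hj⟩ ^ 2) (j : Fin n) :
    b j ^ 2 ^ n = b j := by
  have hn : 0 < n := Nat.zero_lt_of_lt j.2
  have hiter : ∀ t : ℕ, b ⟨(j + t) % n, Nat.mod_lt _ hn⟩ = b j ^ 2 ^ t := by
    intro t
    induction t with
    | zero => simp [Nat.mod_eq_of_lt j.2]
    | succ t ih =>
      have h := hsq ((j + t) % n) (Nat.mod_lt _ hn)
      simp only [Nat.mod_add_mod] at h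
      rw [← add_assoc, h, ih, ← pow_mul, pow_succ]
  simpa [Nat.mod_eq_of_lt j.2] using (hiter n).symm

theorem not_hasNontrivialCycle {g : ℝ → ℝ}
    (hg : ∀ ξ, g ξ = 0 → (∃ a : ℤ, ξ = π + 2 * π * a) ∨ Irrational (ξ / π)) :
    ¬ HasNontrivialCycle g := by
  rintro ⟨n, b, ⟨hn, -, -, hsq, hroot⟩, hne⟩
  suffices h : ∀ j, b j = 1 from
    hne (eq_singleton_iff_unique_mem.2 ⟨⟨⟨0, hn⟩, h _⟩, by rintro _ ⟨j, rfl⟩; exact h j⟩)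
  intro j
  obtain ⟨β, hb, hβ⟩ := hroot j
  rcases hg _ hβ with ⟨a, ha⟩ | hirr
  · rw [hb, show β = a * (2 * π) by linarith, ← Complex.exp_int_mul_two_pi_mul_I a]
    push_cast
    ring_nf
  · exfalso
    obtain ⟨m, hm⟩ : ∃ m : ℤ,
        ((2 ^ n : ℕ) : ℂ) * (β * Complex.I) = β * Complex.I + m * (2 * π * Complex.I) := by
      rw [← Complex.exp_eq_exp_iff_exists_int, Complex.exp_nat_mul, ← hb]
      exact pow_two_pow_eq_self_of_sq_succ hsq j
    have hm' : ((2 : ℝ) ^ n - 1) * β = 2 * π * m := by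
      have : (((2 ^ n : ℕ) * β : ℝ) : ℂ) = ((β + m * (2 * π) : ℝ) : ℂ) :=
        mul_right_cancel₀ Complex.I_ne_zero (by push_cast at hm ⊢; linear_combination hm)
      have := Complex.ofReal_inj.1 this
      push_cast at this
      linarith
    have h2n : (2 : ℝ) ^ n - 1 ≠ 0 := by
      have : (2 : ℝ) ≤ 2 ^ n := le_self_pow₀ (by norm_num) hn.ne'
      linarith
    refine hirr.ne_rat (2 * m / (2 ^ n - 1) + 1) ?_
    push_cast
    field_simp
    linear_combination hm'

theorem abs_lineMap_sub_le_max {v w t : ℝ} (c : ℝ) (ht : t ∈ Icc (0 : ℝ) 1) :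
    |lineMap v w t - c| ≤ max |v - c| |w - c| := by
  obtain ⟨h0, h1⟩ := ht
  have hv := abs_le.1 (le_max_left |v - c| |w - c|)
  have hw := abs_le.1 (le_max_right |v - c| |w - c|)
  rw [lineMap_apply_ring, abs_le]
  constructor <;> nlinarith

theorem lineMap_eq_zero_of_mul_nonneg {v w t : ℝ} (hvw : 0 ≤ v * w) (hne : v ≠ 0 ∨ w ≠ 0)
    (ht : t ∈ Icc (0 : ℝ) 1) (h : lineMap v w t = 0) : (t = 0 ∧ v = 0) ∨ (t = 1 ∧ w = 0) := by
  obtain ⟨h0, h1⟩ := ht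
  rw [lineMap_apply_ring] at h
  rcases hne with hv | hw
  · have hsum : (1 - t) * (v * v) + t * (v * w) = 0 := by linear_combination v * h
    have : (1 - t) * (v * v) = 0 := by
      nlinarith [mul_nonneg h0 hvw, mul_nonneg (sub_nonneg.2 h1) (mul_self_nonneg v)]
    have ht1 : t = 1 := by
      linarith [(mul_eq_zero.1 this).resolve_right (mul_self_ne_zero.2 hv)]
    subst ht1
    right; constructor <;> linarith
  · have hsum : (1 - t) * (v * w) + t * (w * w) = 0 := by linear_combination w * h
    have : t * (w * w) = 0 := by
      nlinarith [mul_nonneg (sub_nonneg.2 h1) hvw, mul_nonneg h0 (mul_self_nonneg w)]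
    have ht0 : t = 0 := (mul_eq_zero.1 this).resolve_right (mul_self_ne_zero.2 hw)
    subst ht0
    left; constructor <;> linarith

section GridInterp

variable (θ a b : ℤ → ℝ)

noncomputable def cellInterp (k : ℤ) (x : ℝ) : ℝ :=
  if x - k ≤ θ k then lineMap (a k) (b k) ((x - k) / θ k)
  else lineMap (b k) (a (k + 1)) ((x - k - θ k) / (1 - θ k))

/-- The piecewise linear function taking the value `a k` at `k` and `b k` at `k + θ k`. -/
noncomputable def gridInterp (x : ℝ) : ℝ := cellInterp θ a b ⌊x⌋ x

variable {θ a b}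

theorem continuous_cellInterp (hθ : ∀ k, θ k ≠ 0) (k : ℤ) : Continuous (cellInterp θ a b k) := by
  refine Continuous.if_le ?_ ?_ (by fun_prop) continuous_const fun x hx => ?_
  · exact (lineMap (a k) (b k) : ℝ →ᵃ[ℝ] ℝ).continuous_of_finiteDimensional.comp (by fun_prop)
  · exact (lineMap (b k) (a (k + 1)) : ℝ →ᵃ[ℝ] ℝ).continuous_of_finiteDimensional.comp
      (by fun_prop)
  · rw [hx, div_self (hθ k), sub_self, zero_div, lineMap_apply_one, lineMap_apply_zero]

theorem gridInterp_eq_cellInterp (hθ : ∀ k, θ k ∈ Ioo 0 1) {k : ℤ} {x : ℝ}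
    (hx : x ∈ Icc (k : ℝ) (k + 1)) : gridInterp θ a b x = cellInterp θ a b k x := by
  rcases hx.2.lt_or_eq with hlt | rfl
  · rw [gridInterp, Int.floor_eq_iff.2 ⟨hx.1, hlt⟩]
  · have hk : ⌊(k : ℝ) + 1⌋ = k + 1 := by exact_mod_cast Int.floor_intCast (k + 1)
    have h1 : (1 : ℝ) - θ k ≠ 0 := (sub_pos.2 (hθ k).2).ne'
    simp only [gridInterp, cellInterp, hk]
    rw [if_pos (by push_cast; linarith [(hθ (k + 1)).1]), if_neg (by linarith [(hθ k).2])]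
    rw [show (k : ℝ) + 1 - k - θ k = 1 - θ k by ring, div_self h1]
    push_cast
    rw [sub_self, zero_div, lineMap_apply_zero, lineMap_apply_one]

theorem continuous_gridInterp (hθ : ∀ k, θ k ∈ Ioo 0 1) : Continuous (gridInterp θ a b) := by
  refine (locallyFinite_Icc_of_tendsto (f := fun k : ℤ => (k : ℝ))
    (g := fun k : ℤ => (k : ℝ) + 1) ?_ ?_).continuous ?_ (fun _ => isClosed_Icc) fun k => ?_
  · exact tendsto_intCast_atTop_atTop
  · exact tendsto_atBot_add_const_right _ _ (tendsto_intCast_atBot_iff.2 tendsto_id)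
  · exact eq_univ_of_forall fun x =>
      mem_iUnion.2 ⟨⌊x⌋, Int.floor_le x, (Int.lt_floor_add_one x).le⟩
  · exact (continuous_cellInterp (fun k => (hθ k).1.ne') k).continuousOn.congr
      fun x hx => gridInterp_eq_cellInterp hθ hx

theorem gridInterp_intCast (hθ : ∀ k, 0 ≤ θ k) (k : ℤ) : gridInterp θ a b k = a k := by
  simp [gridInterp, cellInterp, hθ k]

theorem gridInterp_add_intCast {N : ℤ} (hθ : Periodic θ N) (ha : Periodic a N)
    (hb : Periodic b N) (x : ℝ) : gridInterp θ a b (x + N) = gridInterp θ a b x := by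
  have ha1 : a (⌊x⌋ + N + 1) = a (⌊x⌋ + 1) := by rw [add_right_comm, ha]
  simp only [gridInterp, cellInterp, Int.floor_add_intCast, hθ _, ha _, hb _, ha1]
  push_cast
  simp only [add_sub_add_right_eq_sub]

theorem gridInterp_cases (hθ : ∀ k, θ k ∈ Ioo 0 1) (x : ℝ) : ∃ t ∈ Icc (0 : ℝ) 1,
    (x = ⌊x⌋ + t * θ ⌊x⌋ ∧ gridInterp θ a b x = lineMap (a ⌊x⌋) (b ⌊x⌋) t) ∨
    (x = ⌊x⌋ + θ ⌊x⌋ + t * (1 - θ ⌊x⌋) ∧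
      gridInterp θ a b x = lineMap (b ⌊x⌋) (a (⌊x⌋ + 1)) t) := by
  obtain ⟨hθ0, hθ1⟩ := hθ ⌊x⌋
  have hu0 : 0 ≤ x - ⌊x⌋ := Int.fract_nonneg x
  have hu1 : x - ⌊x⌋ < 1 := Int.fract_lt_one x
  by_cases hu : x - ⌊x⌋ ≤ θ ⌊x⌋
  · refine ⟨(x - ⌊x⌋) / θ ⌊x⌋, ⟨by positivity, (div_le_one hθ0).2 hu⟩, Or.inl ⟨?_, ?_⟩⟩
    · field_simp; ring
    · rw [gridInterp, cellInterp, if_pos hu]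
  · replace hu := not_le.1 hu
    refine ⟨(x - ⌊x⌋ - θ ⌊x⌋) / (1 - θ ⌊x⌋), ⟨div_nonneg (by linarith) (by linarith),
      (div_le_one (by linarith)).2 (by linarith)⟩, Or.inr ⟨?_, ?_⟩⟩
    · field_simp [(sub_pos.2 hθ1).ne']; ring
    · rw [gridInterp, cellInterp, if_neg hu.not_ge]

theorem abs_gridInterp_sub_le (hθ : ∀ k, θ k ∈ Ioo 0 1) {F : ℝ → ℝ} {E : ℝ}
    (hF : ∀ (k : ℤ), ∀ x ∈ Icc (k : ℝ) (k + 1),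
      |a k - F x| ≤ E ∧ |b k - F x| ≤ E ∧ |a (k + 1) - F x| ≤ E) (x : ℝ) :
    |gridInterp θ a b x - F x| ≤ E := by
  obtain ⟨hA, hB, hA'⟩ := hF ⌊x⌋ x ⟨Int.floor_le x, (Int.lt_floor_add_one x).le⟩
  obtain ⟨t, ht, ⟨-, h⟩ | ⟨-, h⟩⟩ := gridInterp_cases (a := a) (b := b) hθ x <;> rw [h] <;>
    exact (abs_lineMap_sub_le_max _ ht).trans (max_le ‹_› ‹_›)

theorem gridInterp_eq_zero (hθ : ∀ k, θ k ∈ Ioo 0 1) (hab : ∀ k, 0 ≤ a k * b k)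
    (hba : ∀ k, 0 ≤ b k * a (k + 1)) (hne : ∀ k, b k ≠ 0 ∨ a k ≠ 0 ∧ a (k + 1) ≠ 0) {x : ℝ}
    (hx : gridInterp θ a b x = 0) :
    (∃ k : ℤ, x = k ∧ a k = 0) ∨ ∃ k : ℤ, x = k + θ k ∧ b k = 0 := by
  set k := ⌊x⌋
  obtain ⟨t, ht, ⟨hxt, h⟩ | ⟨hxt, h⟩⟩ := gridInterp_cases (a := a) (b := b) hθ x <;>
    rw [h] at hx
  · rcases lineMap_eq_zero_of_mul_nonneg (hab k) ((hne k).symm.imp_left And.left) ht hx with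
      ⟨rfl, hak⟩ | ⟨rfl, hbk⟩
    · exact Or.inl ⟨k, by simpa using hxt, hak⟩
    · exact Or.inr ⟨k, by simpa using hxt, hbk⟩
  · rcases lineMap_eq_zero_of_mul_nonneg (hba k) ((hne k).imp_right And.right) ht hx with
      ⟨rfl, hbk⟩ | ⟨rfl, hak⟩
    · exact Or.inr ⟨k, by simpa using hxt, hbk⟩
    · exact Or.inl ⟨k + 1, by push_cast; linarith, hak⟩

end GridInterp

noncomputable def pushToward (s τ x : ℝ) : ℝ := if s < 0 then min x (-τ) else max x τ

noncomputable def midVal (a a' τ x : ℝ) : ℝ := if a * a' < 0 then 0 else pushToward (a + a') τ x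

section Push

variable {s τ x : ℝ}

theorem pushToward_le_of_neg (hs : s < 0) : pushToward s τ x ≤ -τ := by
  rw [pushToward, if_pos hs]; exact min_le_right _ _

theorem le_pushToward_of_nonneg (hs : 0 ≤ s) : τ ≤ pushToward s τ x := by
  rw [pushToward, if_neg hs.not_gt]; exact le_max_right _ _

theorem abs_pushToward_sub_le {e : ℝ} (hτ : 0 ≤ τ) (he : 0 ≤ e) (hneg : s < 0 → x ≤ e)
    (hnonneg : 0 ≤ s → -e ≤ x) : |pushToward s τ x - x| ≤ τ + e := by
  unfold pushToward
  split_ifs with hs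
  · have := hneg hs
    rw [abs_le]; constructor
    · have : x - τ - e ≤ min x (-τ) := le_min (by linarith) (by linarith)
      linarith
    · linarith [min_le_left x (-τ)]
  · have := hnonneg (not_lt.1 hs)
    rw [abs_le]; constructor
    · linarith [le_max_left x τ]
    · have : max x τ ≤ x + τ + e := max_le (by linarith) (by linarith)
      linarith

variable {a a' : ℝ}

theorem mul_midVal_nonneg (hτ : 0 ≤ τ) : 0 ≤ a * midVal a a' τ x := by
  unfold midVal
  split_ifs with h
  · rw [mul_zero]
  · rcases lt_or_ge (a + a') 0 with hs | hs
    · have ha : a ≤ 0 := by nlinarith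
      exact mul_nonneg_of_nonpos_of_nonpos ha ((pushToward_le_of_neg hs).trans (by linarith))
    · have ha : 0 ≤ a := by nlinarith
      exact mul_nonneg ha (hτ.trans (le_pushToward_of_nonneg hs))

theorem midVal_mul_nonneg (hτ : 0 ≤ τ) : 0 ≤ midVal a a' τ x * a' := by
  have : midVal a a' τ x = midVal a' a τ x := by simp only [midVal, mul_comm a, add_comm a]
  rw [this, mul_comm]
  exact mul_midVal_nonneg hτ

theorem midVal_ne_zero_or (hτ : 0 < τ) : midVal a a' τ x ≠ 0 ∨ a ≠ 0 ∧ a' ≠ 0 := by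
  unfold midVal
  split_ifs with h
  · exact Or.inr (mul_ne_zero_iff.1 h.ne)
  · rcases lt_or_ge (a + a') 0 with hs | hs
    · exact Or.inl (by linarith [pushToward_le_of_neg (τ := τ) (x := x) hs])
    · exact Or.inl (by linarith [le_pushToward_of_nonneg (τ := τ) (x := x) hs])

theorem abs_midVal_sub_le {u u' e : ℝ} (hτ : 0 ≤ τ)
    (hu : 0 ≤ a → 0 ≤ u) (hu' : a ≤ 0 → u ≤ 0) (hu₁ : 0 ≤ a' → 0 ≤ u') (hu₁' : a' ≤ 0 → u' ≤ 0)
    (hx : |x - u| ≤ e) (hx' : |x - u'| ≤ e) : |midVal a a' τ x - x| ≤ τ + e := by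
  have he : 0 ≤ e := (abs_nonneg _).trans hx
  obtain ⟨h1, h2⟩ := abs_le.1 hx
  obtain ⟨h1', h2'⟩ := abs_le.1 hx'
  unfold midVal
  split_ifs with h
  · rw [zero_sub, abs_neg, abs_le]
    rcases mul_neg_iff.1 h with ⟨ha, ha'⟩ | ⟨ha, ha'⟩
    · have := hu ha.le; have := hu₁' ha'.le; constructor <;> linarith
    · have := hu' ha.le; have := hu₁ ha'.le; constructor <;> linarith
  · refine abs_pushToward_sub_le hτ he (fun hs => ?_) (fun hs => ?_)
    · have : a ≤ 0 := by nlinarith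
      linarith [hu' this]
    · have : 0 ≤ a := by nlinarith
      linarith [hu this]

end Push

noncomputable def pairNormalize (c : ℝ) (r : ℝ → ℝ) (ξ : ℝ) : ℝ :=
  r ξ / max 1 √(r ξ ^ 2 + r (ξ + c) ^ 2)

section PairNormalize

variable {c : ℝ} {r : ℝ → ℝ}

theorem pairNormalize_denom_pos (ξ : ℝ) : 0 < max 1 √(r ξ ^ 2 + r (ξ + c) ^ 2) :=
  one_pos.trans_le (le_max_left _ _)

theorem continuous_pairNormalize (hr : Continuous r) : Continuous (pairNormalize c r) :=
  hr.div (continuous_const.max (by fun_prop)) fun ξ => (pairNormalize_denom_pos ξ).ne'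

theorem Function.Periodic.pairNormalize {p : ℝ} (hr : Periodic r p) :
    Periodic (pairNormalize c r) p := fun ξ => by
  simp only [_root_.pairNormalize, hr ξ, add_right_comm ξ p c, hr (ξ + c)]

theorem pairNormalize_eq_zero_iff {ξ : ℝ} : pairNormalize c r ξ = 0 ↔ r ξ = 0 :=
  div_eq_zero_iff.trans (or_iff_left (pairNormalize_denom_pos ξ).ne')

theorem pairNormalize_eq_self {ξ : ℝ} (h : r ξ ^ 2 + r (ξ + c) ^ 2 ≤ 1) :
    pairNormalize c r ξ = r ξ := by
  rw [pairNormalize, max_eq_left (sqrt_le_one.2 h), div_one]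

theorem pairNormalize_sq_add_sq_le (hr : Periodic r (2 * c)) (ξ : ℝ) :
    pairNormalize c r ξ ^ 2 + pairNormalize c r (ξ + c) ^ 2 ≤ 1 := by
  have hsym : r (ξ + c + c) = r ξ := by rw [add_assoc, ← two_mul, hr]
  set S := r ξ ^ 2 + r (ξ + c) ^ 2
  have hS : S ≤ max 1 √S ^ 2 :=
    (sq_sqrt (by positivity)).symm.le.trans (pow_le_pow_left₀ (sqrt_nonneg _) (le_max_right _ _) 2)
  simp only [pairNormalize, hsym, add_comm (r (ξ + c) ^ 2)]
  rw [div_pow, div_pow, ← add_div, div_le_one (pow_pos (pairNormalize_denom_pos ξ) 2)]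
  exact hS

theorem abs_sub_pairNormalize_le {f : ℝ → ℝ} {η : ℝ} (hf : ∀ ξ, f ξ ^ 2 + f (ξ + c) ^ 2 ≤ 1)
    (hr : ∀ ξ, |r ξ - f ξ| ≤ η) (hη : η ≤ 1) (ξ : ℝ) : |f ξ - pairNormalize c r ξ| ≤ 7 * η := by
  have hη0 : 0 ≤ η := (abs_nonneg _).trans (hr ξ)
  have hf1 : ∀ ξ, |f ξ| ≤ 1 := fun ξ =>
    (sq_le_one_iff_abs_le_one _).1 (by nlinarith [hf ξ, sq_nonneg (f (ξ + c))])
  have hsq : ∀ ξ, r ξ ^ 2 ≤ f ξ ^ 2 + 3 * η := fun ξ => by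
    obtain ⟨h1, h2⟩ := abs_le.1 (hr ξ)
    obtain ⟨h3, h4⟩ := abs_le.1 (hf1 ξ)
    nlinarith
  set m := max 1 √(r ξ ^ 2 + r (ξ + c) ^ 2)
  have hm1 : 1 ≤ m := le_max_left _ _
  have hm : m ≤ 1 + 3 * η := by
    refine max_le (by linarith) (sqrt_le_iff.2 ⟨by linarith, ?_⟩)
    nlinarith [hsq ξ, hsq (ξ + c), hf ξ]
  have hr2 : |r ξ| ≤ 2 := by
    have := abs_sub_abs_le_abs_sub (r ξ) (f ξ)
    linarith [hr ξ, hf1 ξ]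
  have hnorm : |r ξ - pairNormalize c r ξ| ≤ 6 * η := by
    have : r ξ - pairNormalize c r ξ = r ξ * ((m - 1) / m) := by
      simp only [pairNormalize, m]; field_simp
    rw [this, abs_mul, abs_of_nonneg (div_nonneg (sub_nonneg.2 hm1) (zero_le_one.trans hm1))]
    have : (m - 1) / m ≤ 3 * η := by rw [div_le_iff₀ (by linarith)]; nlinarith
    nlinarith [abs_nonneg (r ξ)]
  calc |f ξ - pairNormalize c r ξ| ≤ |f ξ - r ξ| + |r ξ - pairNormalize c r ξ| := abs_sub_le _ _ _
    _ ≤ η + 6 * η := add_le_add (by rw [abs_sub_comm]; exact hr ξ) hnorm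
    _ = 7 * η := by ring

end PairNormalize

/-- The extra node of cell `k` sits at `k + cellSplit M k`. The offset `√2 / 4` makes it an
irrational multiple of `π` (after scaling by `π / M`); the term depending on `k % (2M)` keeps the
nodes of the cells `k` and `k + M` from being exactly `π` apart. -/
noncomputable def cellSplit (M : ℕ) (k : ℤ) : ℝ := √2 / 4 + (k % (2 * M) : ℤ) / (4 * M)

noncomputable def midNode (M : ℕ) (k : ℤ) : ℝ := (k + cellSplit M k) * (π / M)

section Grid

variable {M : ℕ}

theorem cellSplit_mem_Ioo (hM : 0 < M) (k : ℤ) : cellSplit M k ∈ Ioo 0 1 := by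
  have h0 : (0 : ℝ) ≤ (k % (2 * M) : ℤ) := Int.cast_nonneg (Int.emod_nonneg _ (by omega))
  have h1 : ((k % (2 * M) : ℤ) : ℝ) + 1 ≤ 2 * M := by
    exact_mod_cast Int.emod_lt_of_pos k (by omega : (0 : ℤ) < 2 * M)
  have hs : √2 < 2 := by
    rw [sqrt_lt' two_pos]; norm_num
  constructor
  · unfold cellSplit; positivity
  · unfold cellSplit
    have : ((k % (2 * M) : ℤ) : ℝ) / (4 * M) < 1 / 2 := by
      rw [div_lt_iff₀ (by positivity)]; linarith
    linarith

theorem cellSplit_periodic : Periodic (cellSplit M) (2 * M) := fun k => by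
  simp only [cellSplit, Int.add_emod_right]

theorem irrational_midNode_div_pi (hM : 0 < M) (k : ℤ) : Irrational (midNode M k / π) := by
  have h : midNode M k / π = √2 / 4 / M + ((k + (k % (2 * M) : ℤ) / (4 * M) : ℚ) / M : ℚ) := by
    unfold midNode cellSplit
    push_cast
    field_simp
    ring
  rw [h]
  exact ((irrational_sqrt_two.div_natCast (by norm_num)).div_natCast hM.ne').add_ratCast _

theorem midNode_add_pi_ne (hM : 0 < M) (k j : ℤ) : midNode M k + π ≠ midNode M j := by
  intro h
  have hres : ((j % (2 * M) - k % (2 * M) : ℤ) : ℝ) = ((4 * M * (k + M - j) : ℤ) : ℝ) := by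
    unfold midNode cellSplit at h
    field_simp at h
    push_cast
    linear_combination -h
  have hres' := Int.cast_injective hres
  have hj0 := Int.emod_nonneg j (by omega : (2 * M : ℤ) ≠ 0)
  have hj1 := Int.emod_lt_of_pos j (by omega : (0 : ℤ) < 2 * M)
  have hk0 := Int.emod_nonneg k (by omega : (2 * M : ℤ) ≠ 0)
  have hk1 := Int.emod_lt_of_pos k (by omega : (0 : ℤ) < 2 * M)
  have hj : j = k + M := by
    rcases lt_trichotomy (k + M - j) 0 with hc | hc | hc
    · nlinarith
    · omega
    · nlinarith
  subst hj
  have hdvd : (2 * M : ℤ) ∣ M := by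
    simpa using (Int.ModEq.dvd (show k ≡ k + M [ZMOD 2 * M] by unfold Int.ModEq; omega))
  have := Int.le_of_dvd (by omega) hdvd
  omega

theorem mem_Ico_of_midNode_mem_Ico (hM : 0 < M) {k : ℤ} (hk : midNode M k ∈ Ico 0 (2 * π)) :
    k ∈ Ico 0 (2 * (M : ℤ)) := by
  have hM' : (0 : ℝ) < M := Nat.cast_pos.2 hM
  obtain ⟨h0, h1⟩ := cellSplit_mem_Ioo hM k
  obtain ⟨hl, hr⟩ := hk
  have hδ : 0 < π / M := div_pos pi_pos hM'
  unfold midNode at hl hr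
  have hl' : (-1 : ℝ) < k := by nlinarith
  have hr' : (k : ℝ) < 2 * M := by
    rw [show 2 * π = 2 * M * (π / M) by field_simp] at hr
    nlinarith
  exact ⟨by exact_mod_cast (show (-1 : ℤ) < k by exact_mod_cast hl'), by exact_mod_cast hr'⟩

end Grid

theorem abs_apply_mul_sub_le_of_mem_Icc {f : ℝ → ℝ} {δ e a x x' : ℝ} (hδ : 0 ≤ δ)
    (hf : ∀ x y, |x - y| ≤ δ → |f x - f y| ≤ e) (hx : x ∈ Icc a (a + 1))
    (hx' : x' ∈ Icc a (a + 1)) : |f (x * δ) - f (x' * δ)| ≤ e := by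
  apply hf
  rw [← sub_mul, abs_mul, abs_of_nonneg hδ]
  have : |x - x'| ≤ 1 := abs_sub_le_iff.2 ⟨by linarith [hx.2, hx'.1], by linarith [hx.1, hx'.2]⟩
  nlinarith [abs_nonneg (x - x')]

theorem exists_eq_pi_add_of_dvd {M : ℕ} (hM : 0 < M) {k : ℤ} (h : (2 * M : ℤ) ∣ k - M) :
    ∃ a : ℤ, k * (π / M) = π + 2 * π * a := by
  obtain ⟨a, ha⟩ := h
  refine ⟨a, ?_⟩
  rw [show k = M + 2 * M * a by linarith]
  push_cast
  field_simp [(Nat.cast_pos.2 hM).ne']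

/-- `(2M) ∣ k - M` says that the grid point `k * (π / M)` lies in `π + 2πℤ`. -/
noncomputable def nodeVal (f : ℝ → ℝ) (M : ℕ) (τ : ℝ) (k : ℤ) : ℝ :=
  if (2 * M : ℤ) ∣ k - M then 0 else pushToward (f (k * (π / M))) τ (f (k * (π / M)))

noncomputable def midNodeVal (f : ℝ → ℝ) (M : ℕ) (τ : ℝ) (k : ℤ) : ℝ :=
  midVal (nodeVal f M τ k) (nodeVal f M τ (k + 1)) τ (f (midNode M k))

noncomputable def plApprox (f : ℝ → ℝ) (M : ℕ) (τ : ℝ) (ξ : ℝ) : ℝ :=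
  gridInterp (cellSplit M) (nodeVal f M τ) (midNodeVal f M τ) (ξ / (π / M))

section PlApprox

variable {f : ℝ → ℝ} {M : ℕ} {τ : ℝ}

theorem dvd_of_nodeVal_eq_zero (hτ : 0 < τ) {k : ℤ} (h : nodeVal f M τ k = 0) :
    (2 * M : ℤ) ∣ k - M := by
  by_contra hk
  rw [nodeVal, if_neg hk] at h
  rcases lt_or_ge (f (k * (π / M))) 0 with hs | hs
  · linarith [pushToward_le_of_neg (τ := τ) (x := f (k * (π / M))) hs]
  · linarith [le_pushToward_of_nonneg (τ := τ) (x := f (k * (π / M))) hs]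

theorem continuous_plApprox (hM : 0 < M) : Continuous (plApprox f M τ) :=
  (continuous_gridInterp (cellSplit_mem_Ioo hM)).comp (continuous_id.div_const _)

theorem plApprox_intCast_mul (hM : 0 < M) (k : ℤ) :
    plApprox f M τ (k * (π / M)) = nodeVal f M τ k := by
  rw [plApprox, mul_div_cancel_right₀ _ (div_pos pi_pos (Nat.cast_pos.2 hM)).ne',
    gridInterp_intCast fun k => (cellSplit_mem_Ioo hM k).1.le]

theorem plApprox_zero (hM : 0 < M) (hτ : τ ≤ 1) (hf0 : f 0 = 1) : plApprox f M τ 0 = 1 := by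
  have hndvd : ¬ (2 * M : ℤ) ∣ 0 - M := fun h => by
    have h' : (2 * M : ℤ) ∣ M := by rw [← dvd_neg]; simpa using h
    have := Int.le_of_dvd (by omega) h'
    omega
  have h := plApprox_intCast_mul (f := f) (τ := τ) hM 0
  rw [Int.cast_zero, zero_mul] at h
  rw [h, nodeVal, if_neg hndvd, Int.cast_zero, zero_mul, hf0, pushToward, if_neg (by norm_num),
    max_eq_left hτ]

theorem plApprox_pi (hM : 0 < M) : plApprox f M τ π = 0 := by
  have h := plApprox_intCast_mul (f := f) (τ := τ) hM M
  rw [Int.cast_natCast, mul_div_cancel₀ _ (Nat.cast_pos.2 hM).ne'] at h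
  rw [h, nodeVal, if_pos (by simp)]

theorem plApprox_periodic (hM : 0 < M) (hper : Periodic f (2 * π)) :
    Periodic (plApprox f M τ) (2 * π) := fun ξ => by
  have hper' : ∀ x, f (x + 2 * π) = f x := hper
  have hA : Periodic (nodeVal f M τ) (2 * M) := fun k => by
    have hx : ((k + 2 * M : ℤ) : ℝ) * (π / M) = k * (π / M) + 2 * π := by
      push_cast; field_simp
    simp only [nodeVal, show k + 2 * M - M = k - M + 2 * M by ring, dvd_add_self_right, hx, hper']
  have hmid : ∀ k, midNode M (k + 2 * M) = midNode M k + 2 * π := fun k => by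
    simp only [midNode, cellSplit_periodic k]
    push_cast; field_simp; ring
  have hB : Periodic (midNodeVal f M τ) (2 * M) := fun k => by
    simp only [midNodeVal, hA k, add_right_comm k (2 * (M : ℤ)) 1, hA (k + 1), hmid, hper']
  have hx : (ξ + 2 * π) / (π / M) = ξ / (π / M) + ((2 * M : ℤ) : ℝ) := by
    push_cast; field_simp
  rw [plApprox, plApprox, hx, gridInterp_add_intCast cellSplit_periodic hA hB]

theorem plApprox_eq_zero (hM : 0 < M) (hτ : 0 < τ) {ξ : ℝ} (h : plApprox f M τ ξ = 0) :
    (∃ a : ℤ, ξ = π + 2 * π * a) ∨ ∃ k, ξ = midNode M k := by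
  have hδ : π / M ≠ 0 := (div_pos pi_pos (Nat.cast_pos.2 hM)).ne'
  rcases gridInterp_eq_zero (cellSplit_mem_Ioo hM) (fun _ => mul_midVal_nonneg hτ.le)
    (fun _ => midVal_mul_nonneg hτ.le) (fun _ => midVal_ne_zero_or hτ) h with
    ⟨k, hk, hAk⟩ | ⟨k, hk, -⟩
  · obtain ⟨a, ha⟩ := exists_eq_pi_add_of_dvd hM (dvd_of_nodeVal_eq_zero hτ hAk)
    exact Or.inl ⟨a, by rw [← ha, ← hk, div_mul_cancel₀ _ hδ]⟩
  · exact Or.inr ⟨k, by rw [midNode, ← hk, div_mul_cancel₀ _ hδ]⟩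

theorem abs_nodeVal_sub_le (hM : 0 < M) (hfπ : ∀ a : ℤ, f (π + 2 * π * a) = 0) (hτ : 0 ≤ τ)
    (k : ℤ) : |nodeVal f M τ k - f (k * (π / M))| ≤ τ := by
  unfold nodeVal
  split_ifs with hk
  · obtain ⟨a, ha⟩ := exists_eq_pi_add_of_dvd hM hk
    simpa [ha, hfπ] using hτ
  · simpa using abs_pushToward_sub_le hτ le_rfl (fun h => h.le) (fun h => by simpa using h)

theorem nodeVal_sign (hM : 0 < M) (hfπ : ∀ a : ℤ, f (π + 2 * π * a) = 0) (hτ : 0 < τ)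
    (k : ℤ) : (0 ≤ nodeVal f M τ k → 0 ≤ f (k * (π / M))) ∧
      (nodeVal f M τ k ≤ 0 → f (k * (π / M)) ≤ 0) := by
  unfold nodeVal
  split_ifs with hk
  · obtain ⟨a, ha⟩ := exists_eq_pi_add_of_dvd hM hk
    simp [ha, hfπ]
  · rcases lt_or_ge (f (k * (π / M))) 0 with hs | hs
    · have := pushToward_le_of_neg (τ := τ) (x := f (k * (π / M))) hs
      exact ⟨fun h => by linarith, fun _ => hs.le⟩
    · have := le_pushToward_of_nonneg (τ := τ) (x := f (k * (π / M))) hs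
      exact ⟨fun _ => hs, fun h => by linarith⟩

theorem abs_plApprox_sub_le (hM : 0 < M) (hfπ : ∀ a : ℤ, f (π + 2 * π * a) = 0) (hτ : 0 < τ)
    {e : ℝ} (hUC : ∀ x y, |x - y| ≤ π / M → |f x - f y| ≤ e) (ξ : ℝ) :
    |plApprox f M τ ξ - f ξ| ≤ τ + 2 * e := by
  have hδ : 0 < π / M := div_pos pi_pos (Nat.cast_pos.2 hM)
  have he : 0 ≤ e := (abs_nonneg _).trans (hUC 0 0 (by simpa using hδ.le))
  have key := abs_gridInterp_sub_le (a := nodeVal f M τ) (b := midNodeVal f M τ)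
    (F := fun x => f (x * (π / M))) (E := τ + 2 * e) (cellSplit_mem_Ioo hM) ?_ (ξ / (π / M))
  · simpa [plApprox, div_mul_cancel₀ _ hδ.ne'] using key
  intro k x hx
  have hcell := fun {x'} (hx' : x' ∈ Icc (k : ℝ) (k + 1)) =>
    abs_apply_mul_sub_le_of_mem_Icc hδ.le hUC hx' hx
  obtain ⟨hθ0, hθ1⟩ := cellSplit_mem_Ioo hM k
  have hk : (k : ℝ) ∈ Icc (k : ℝ) (k + 1) := ⟨le_rfl, by linarith⟩
  have hk1 : ((k + 1 : ℤ) : ℝ) ∈ Icc (k : ℝ) (k + 1) := by push_cast; exact ⟨by linarith, le_rfl⟩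
  have hy : (k + cellSplit M k) ∈ Icc (k : ℝ) (k + 1) := ⟨by linarith, by linarith⟩
  obtain ⟨s, s'⟩ := nodeVal_sign hM hfπ hτ k
  obtain ⟨s₁, s₁'⟩ := nodeVal_sign hM hfπ hτ (k + 1)
  have hB : |midNodeVal f M τ k - f (midNode M k)| ≤ τ + e :=
    abs_midVal_sub_le hτ.le s s' s₁ s₁' (abs_apply_mul_sub_le_of_mem_Icc hδ.le hUC hy hk)
      (abs_apply_mul_sub_le_of_mem_Icc hδ.le hUC hy hk1)
  refine ⟨?_, ?_, ?_⟩
  · linarith [abs_sub_le (nodeVal f M τ k) (f (k * (π / M))) (f (x * (π / M))),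
      abs_nodeVal_sub_le hM hfπ hτ.le k, hcell hk]
  · have hy' : |f (midNode M k) - f (x * (π / M))| ≤ e := hcell hy
    linarith [abs_sub_le (midNodeVal f M τ k) (f (midNode M k)) (f (x * (π / M)))]
  · linarith [abs_sub_le (nodeVal f M τ (k + 1)) (f ((k + 1 : ℤ) * (π / M))) (f (x * (π / M))),
      abs_nodeVal_sub_le hM hfπ hτ.le (k + 1), hcell hk1]

end PlApprox

section ZeroSet

variable {M : ℕ} {g : ℝ → ℝ}

theorem finite_zeros_Ico (hM : 0 < M)
    (hz : ∀ ξ, g ξ = 0 → (∃ a : ℤ, ξ = π + 2 * π * a) ∨ ∃ k, ξ = midNode M k) :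
    {ξ ∈ Ico (0 : ℝ) (2 * π) | g ξ = 0}.Finite := by
  refine ((finite_Ico 0 (2 * (M : ℤ))).image (midNode M) |>.insert π).subset ?_
  rintro ξ ⟨hξ, hgξ⟩
  rcases hz ξ hgξ with ⟨a, rfl⟩ | ⟨k, rfl⟩
  · have h1 : (a : ℝ) < 1 / 2 := by nlinarith [pi_pos, hξ.2]
    have h2 : (-1 / 2 : ℝ) ≤ a := by nlinarith [pi_pos, hξ.1]
    have : a = 0 := by
      have : a < 1 := by exact_mod_cast h1.trans (by norm_num : (1 / 2 : ℝ) < 1)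
      have : -1 < a := by exact_mod_cast (by linarith : (-1 : ℝ) < a)
      omega
    subst this
    simp
  · exact mem_insert_of_mem _ ⟨k, mem_Ico_of_midNode_mem_Ico hM hξ, rfl⟩

theorem not_exists_zero_zero_add_pi (hM : 0 < M)
    (hz : ∀ ξ, g ξ = 0 → (∃ a : ℤ, ξ = π + 2 * π * a) ∨ ∃ k, ξ = midNode M k) :
    ¬ ∃ α, g α = 0 ∧ g (α + π) = 0 := by
  rintro ⟨α, h, h'⟩
  rcases hz α h with ⟨a, rfl⟩ | ⟨k, rfl⟩ <;> rcases hz _ h' with ⟨b, hb⟩ | ⟨j, hj⟩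
  · have : ((2 * a + 1 : ℤ) : ℝ) = (2 * b : ℤ) :=
      mul_left_cancel₀ pi_ne_zero (by push_cast; linear_combination hb)
    have := Int.cast_injective this
    omega
  · refine (irrational_midNode_div_pi hM j).ne_int (2 * a + 2) ?_
    rw [← hj]; push_cast; field_simp; ring
  · refine (irrational_midNode_div_pi hM k).ne_int (2 * b) ?_
    rw [show midNode M k = 2 * π * b by linarith]; push_cast; field_simp
  · exact midNode_add_pi_ne hM k j hj

end ZeroSet

theorem stmt1 (f : ℝ → ℝ) (hf : Continuous f)
    (hper : ∀ ξ : ℝ, f (ξ + 2 * Real.pi) = f ξ)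
    (hf0 : f 0 = 1)
    (hbd : ∀ ξ : ℝ, f ξ ^ 2 + f (ξ + Real.pi) ^ 2 ≤ 1)
    (ε : ℝ) (hε : 0 < ε) :
    ∃ g : ℝ → ℝ, Continuous g ∧ (∀ ξ : ℝ, g (ξ + 2 * Real.pi) = g ξ) ∧
      g 0 = 1 ∧
      (∀ ξ : ℝ, |f ξ - g ξ| < ε) ∧
      (∀ ξ : ℝ, g ξ ^ 2 + g (ξ + Real.pi) ^ 2 ≤ 1) ∧
      {ξ ∈ Set.Ico (0 : ℝ) (2 * Real.pi) | g ξ = 0}.Finite ∧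
      (¬ ∃ α : ℝ, g α = 0 ∧ g (α + Real.pi) = 0) ∧
      ¬ HasNontrivialCycle g := by
  have hper' : Periodic f (2 * π) := hper
  have hfπ : ∀ a : ℤ, f (π + 2 * π * a) = 0 := fun a => by
    have h := hbd 0
    rw [zero_add, hf0] at h
    rw [show π + 2 * π * a = π + a * (2 * π) by ring, hper'.int_mul a π]
    exact pow_eq_zero_iff two_ne_zero |>.1 (le_antisymm (by linarith) (sq_nonneg _))
  set e := min ε 1 / 30 with he
  have he0 : 0 < e := by positivity
  have he1 : 3 * e ≤ 1 := by linarith [min_le_right ε 1]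
  obtain ⟨ρ, hρ, hUC⟩ := Metric.uniformContinuous_iff.1
    (hper'.uniformContinuous_of_continuous two_pi_pos hf) e he0
  obtain ⟨M, hM⟩ := exists_nat_gt (π / ρ)
  have hM0 : 0 < M := Nat.cast_pos.1 ((div_pos pi_pos hρ).trans hM)
  have hδ : π / M < ρ :=
    (div_lt_iff₀ (Nat.cast_pos.2 hM0)).2 (by rwa [div_lt_iff₀ hρ, mul_comm] at hM)
  have hUC' : ∀ x y, |x - y| ≤ π / M → |f x - f y| ≤ e := fun x y hxy =>
    (hUC (hxy.trans_lt hδ)).le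
  set r := plApprox f M e
  have hr : Periodic r (2 * π) := plApprox_periodic hM0 hper'
  have hz : ∀ ξ, pairNormalize π r ξ = 0 → (∃ a : ℤ, ξ = π + 2 * π * a) ∨ ∃ k, ξ = midNode M k :=
    fun ξ hξ => plApprox_eq_zero hM0 he0 (pairNormalize_eq_zero_iff.1 hξ)
  refine ⟨pairNormalize π r, continuous_pairNormalize (continuous_plApprox hM0),
    hr.pairNormalize, ?_, fun ξ => ?_, pairNormalize_sq_add_sq_le hr, finite_zeros_Ico hM0 hz,
    not_exists_zero_zero_add_pi hM0 hz, not_hasNontrivialCycle fun ξ hξ => ?_⟩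
  · have hr0 : r 0 = 1 := plApprox_zero hM0 (by linarith) hf0
    have hrπ : r π = 0 := plApprox_pi hM0
    rw [pairNormalize_eq_self (by rw [zero_add, hr0, hrπ]; norm_num), hr0]
  · have := abs_sub_pairNormalize_le hbd
      (fun ξ => (abs_plApprox_sub_le hM0 hfπ he0 hUC' ξ).trans_eq (by ring : e + 2 * e = 3 * e))
      he1 ξ
    linarith [min_le_left ε 1]
  · exact (hz ξ hξ).imp_right fun ⟨k, hk⟩ => hk ▸ irrational_midNode_div_pi hM0 k
end

section
/- Let j ≥ 1 be an integer and let ξ ∈ ℝ be such that jξ/π is not an integer (so that sin((ξ − πk/j)/2) ≠ 0 for every integer k). Then ∑_{k=0}^{2j−1} t^j_k(ξ) = 1, where t^j_k(ξ) = ( sin(jξ) / (2j · sin((ξ − πk/j)/2)) )². -/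
/-!
With `w = exp (2 i x)` and `ζ = exp (2 π i / n)` one has
`1 / sin² (x - π k / n) = -4 w ζ^k / (w - ζ^k)²`, so the classical identity
`∑_{k<n} 1 / sin² (x - π k / n) = n² / sin² (n x)` is the partial fraction expansion
`∑_{k<n} ζ^k / (w - ζ^k)² = n² w^(n-1) / (w^n - 1)²`. That expansion is the `w`-derivative of
`∑_{k<n} ζ^k / (w - ζ^k) = n / (w^n - 1)`, which comes from the logarithmic derivative of
`w^n - 1 = ∏_{k<n} (w - ζ^k)`. For `x = ξ / 2` and `n = 2 j` the Hermite–Fejér sum is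
`sin² (j ξ) / (4 j²)` times the left-hand side.
-/

open Finset
open scoped Real

namespace IsPrimitiveRoot

theorem prod_range_sub_pow {R : Type*} [CommRing R] [IsDomain R] {n : ℕ} {ζ : R}
    (hζ : IsPrimitiveRoot ζ n) (hn : 0 < n) (w : R) :
    ∏ k ∈ range n, (w - ζ ^ k) = w ^ n - 1 := by
  simpa [Polynomial.eval_prod] using
    (congrArg (Polynomial.eval w) (X_pow_sub_C_eq_prod hζ hn (one_pow n))).symm

variable {𝕜 : Type*} [NontriviallyNormedField 𝕜] {n : ℕ} {ζ : 𝕜}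

theorem sub_pow_ne_zero (hζ : IsPrimitiveRoot ζ n) {w : 𝕜} (hw : w ^ n ≠ 1) (k : ℕ) :
    w - ζ ^ k ≠ 0 := by
  rw [sub_ne_zero]
  rintro rfl
  exact hw (by rw [← pow_mul, mul_comm, pow_mul, hζ.pow_eq_one, one_pow])

theorem sum_inv_sub_pow (hζ : IsPrimitiveRoot ζ n) (hn : 0 < n) {w : 𝕜} (hw : w ^ n ≠ 1) :
    ∑ k ∈ range n, (w - ζ ^ k)⁻¹ = n * w ^ (n - 1) / (w ^ n - 1) :=
  calc ∑ k ∈ range n, (w - ζ ^ k)⁻¹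
      = ∑ k ∈ range n, logDeriv (fun z ↦ z - ζ ^ k) w := by simp [logDeriv_apply]
    _ = logDeriv (fun z ↦ ∏ k ∈ range n, (z - ζ ^ k)) w :=
      (logDeriv_prod (fun k _ ↦ hζ.sub_pow_ne_zero hw k) (fun k _ ↦ by fun_prop)).symm
    _ = n * w ^ (n - 1) / (w ^ n - 1) := by
      simp [hζ.prod_range_sub_pow hn, logDeriv_apply]

theorem sum_pow_div_sub_pow (hζ : IsPrimitiveRoot ζ n) (hn : 0 < n) {w : 𝕜} (hw : w ^ n ≠ 1) :
    ∑ k ∈ range n, ζ ^ k / (w - ζ ^ k) = n / (w ^ n - 1) := by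
  have hterm : ∀ k ∈ range n, ζ ^ k / (w - ζ ^ k) = w * (w - ζ ^ k)⁻¹ - 1 := fun k _ ↦ by
    field_simp [hζ.sub_pow_ne_zero hw k]
    ring
  have hw' : w ^ n - 1 ≠ 0 := sub_ne_zero.mpr hw
  rw [sum_congr rfl hterm, sum_sub_distrib, ← mul_sum, hζ.sum_inv_sub_pow hn hw, sum_const,
    card_range, nsmul_one]
  field_simp
  linear_combination (n : 𝕜) * mul_pow_sub_one hn.ne' w

theorem sum_pow_div_sub_pow_sq (hζ : IsPrimitiveRoot ζ n) (hn : 0 < n) {w : 𝕜}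
    (hw : w ^ n ≠ 1) :
    ∑ k ∈ range n, ζ ^ k / (w - ζ ^ k) ^ 2 = n ^ 2 * w ^ (n - 1) / (w ^ n - 1) ^ 2 := by
  have hne : ∀ k, w - ζ ^ k ≠ 0 := hζ.sub_pow_ne_zero hw
  have hw' : w ^ n - 1 ≠ 0 := sub_ne_zero.mpr hw
  have hlhs : HasDerivAt (fun z ↦ ∑ k ∈ range n, ζ ^ k / (z - ζ ^ k))
      (∑ k ∈ range n, -(ζ ^ k / (w - ζ ^ k) ^ 2)) w := by
    refine HasDerivAt.fun_sum fun k _ ↦ ?_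
    simpa [div_eq_mul_inv, neg_div] using
      (((hasDerivAt_id w).sub_const (ζ ^ k)).inv (hne k)).const_mul (ζ ^ k)
  have hrhs : HasDerivAt (fun z ↦ (n : 𝕜) / (z ^ n - 1))
      (-(n ^ 2 * w ^ (n - 1) / (w ^ n - 1) ^ 2)) w := by
    refine ((hasDerivAt_const w (n : 𝕜)).div ((hasDerivAt_pow n w).sub_const 1) hw').congr_deriv ?_
    ring
  have heq : (fun z ↦ ∑ k ∈ range n, ζ ^ k / (z - ζ ^ k)) =ᶠ[nhds w] fun z ↦ n / (z ^ n - 1) := by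
    filter_upwards [(continuous_pow n).continuousAt.eventually_ne hw] with z hz
    exact hζ.sum_pow_div_sub_pow hn hz
  rw [← neg_inj, ← sum_neg_distrib]
  exact hlhs.unique (hrhs.congr_of_eventuallyEq heq)

end IsPrimitiveRoot

namespace Complex

theorem exp_mul_I_sub_exp_mul_I_sq (a b : ℂ) :
    (exp (a * I) - exp (b * I)) ^ 2 = -4 * exp ((a + b) * I) * sin ((a - b) / 2) ^ 2 := by
  have ha : a * I = (a + b) / 2 * I + (a - b) / 2 * I := by ring
  have hb : b * I = (a + b) / 2 * I + -((a - b) / 2) * I := by ring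
  have hab : (a + b) * I = (a + b) / 2 * I + (a + b) / 2 * I := by ring
  rw [ha, hb, hab, exp_add, exp_add, exp_add, sin]
  ring_nf
  rw [I_sq]
  ring

theorem sum_inv_sin_sq {n : ℕ} (hn : 0 < n) {x : ℂ} (hx : sin (n * x) ≠ 0) :
    ∑ k ∈ range n, (sin (x - π * k / n) ^ 2)⁻¹ = n ^ 2 / sin (n * x) ^ 2 := by
  set w := exp (2 * x * I)
  have hw0 : w ≠ 0 := exp_ne_zero _
  set ζ := exp (2 * π * I / n)
  have hζ : IsPrimitiveRoot ζ n := isPrimitiveRoot_exp n hn.ne'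
  have hwn : (w ^ n - 1) ^ 2 = -4 * w ^ n * sin (n * x) ^ 2 := by
    have hpow : w ^ n = exp (2 * (n * x) * I) := by rw [← exp_nat_mul]; ring_nf
    have h := exp_mul_I_sub_exp_mul_I_sq (2 * (n * x)) 0
    rwa [zero_mul, exp_zero, add_zero, sub_zero, ← hpow, mul_div_cancel_left₀ _ two_ne_zero] at h
  have hw : w ^ n ≠ 1 := fun h ↦ by
    rw [h, sub_self] at hwn
    simp [hx] at hwn
  have hterm : ∀ k ∈ range n, (sin (x - π * k / n) ^ 2)⁻¹ = -4 * w * (ζ ^ k / (w - ζ ^ k) ^ 2) := by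
    intro k _
    have hpow : ζ ^ k = exp (2 * π * k / n * I) := by rw [← exp_nat_mul]; ring_nf
    have hsq : (w - ζ ^ k) ^ 2 = -4 * (w * ζ ^ k) * sin (x - π * k / n) ^ 2 := by
      rw [hpow, ← exp_add, ← add_mul, exp_mul_I_sub_exp_mul_I_sq]
      ring_nf
    have hs : sin (x - π * k / n) ≠ 0 := fun h0 ↦
      hζ.sub_pow_ne_zero hw k (pow_eq_zero_iff two_ne_zero |>.mp (by rw [hsq, h0]; ring))
    have hζk : ζ ^ k ≠ 0 := pow_ne_zero _ (exp_ne_zero _)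
    rw [hsq]
    field_simp
  rw [sum_congr rfl hterm, ← mul_sum, hζ.sum_pow_div_sub_pow_sq hn hw, hwn]
  field_simp
  linear_combination (n : ℂ) ^ 2 * mul_pow_sub_one hn.ne' w

end Complex

theorem Real.sum_inv_sin_sq {n : ℕ} (hn : 0 < n) {x : ℝ} (hx : Real.sin (n * x) ≠ 0) :
    ∑ k ∈ range n, (Real.sin (x - π * k / n) ^ 2)⁻¹ = n ^ 2 / Real.sin (n * x) ^ 2 := by
  exact_mod_cast Complex.sum_inv_sin_sq hn (x := x) (by exact_mod_cast hx)

theorem stmt2 (j : ℕ) (hj : 1 ≤ j) (ξ : ℝ)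
    (h : ¬ ∃ n : ℤ, (j : ℝ) * ξ / Real.pi = n) :
    ∑ k ∈ Finset.range (2 * j),
        (Real.sin ((j : ℝ) * ξ) /
          (2 * (j : ℝ) * Real.sin ((ξ - Real.pi * k / j) / 2))) ^ 2 = 1 := by
  have hj0 : (j : ℝ) ≠ 0 := Nat.cast_ne_zero.mpr (by omega)
  have hsin : Real.sin (j * ξ) ≠ 0 := fun h0 ↦ by
    obtain ⟨m, hm⟩ := Real.sin_eq_zero_iff.mp h0
    exact h ⟨m, by rw [← hm]; field_simp⟩
  have hnode : ∀ k : ℕ, (ξ - π * k / j) / 2 = ξ / 2 - π * k / ↑(2 * j) := fun k ↦ by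
    push_cast; field_simp
  have harg : ((2 * j : ℕ) : ℝ) * (ξ / 2) = j * ξ := by push_cast; ring
  have hcsc := Real.sum_inv_sin_sq (n := 2 * j) (by omega) (x := ξ / 2) (harg ▸ hsin)
  rw [harg] at hcsc
  calc ∑ k ∈ range (2 * j), (Real.sin (j * ξ) / (2 * j * Real.sin ((ξ - π * k / j) / 2))) ^ 2
      = Real.sin (j * ξ) ^ 2 / (2 * j) ^ 2
          * ∑ k ∈ range (2 * j), (Real.sin (ξ / 2 - π * k / ↑(2 * j)) ^ 2)⁻¹ := by
        rw [mul_sum]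
        refine sum_congr rfl fun k _ ↦ ?_
        rw [hnode]
        ring
    _ = 1 := by
        rw [hcsc]
        push_cast
        field_simp
end

section
/- Let j ≥ 1 be an integer and let v_0,…,v_{2j−1} be real numbers. For every ξ ∈ ℝ with jξ/π not an integer, ∑_{k=0}^{2j−1} v_k · t^j_k(ξ) = ∑_{m=−(2j−1)}^{2j−1} (1 − |m|/(2j)) · ṽ(m) · e^{imξ}, where ṽ(m) = (1/(2j)) · ∑_{k=0}^{2j−1} v_k · e^{−i·m·πk/j} is the inverse discrete Fourier transform of the sample values. -/
/-!
Expanding the right-hand side and exchanging the two sums, the coefficient of `v k` becomes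
`(2j)⁻² · ∑_{|m| < 2j} (2j - |m|) e^{im(ξ - ξ_k)}`, a multiple of the Fejér kernel at
`θ = ξ - ξ_k`. For `z = e^{iθ}` the Dirichlet sums telescope, `D_n(z)(z - 1) = z^{n+1} - z^{-n}`,
and `F_{n+1} = F_n + D_n`, whence `F_n(z)(2 - z - z⁻¹) = 2 - z^n - z^{-n}`, which is the classical
`F_n(θ) · 4 sin²(θ/2) = 4 sin²(nθ/2)`. Finally `sin²(j(ξ - ξ_k)) = sin²(jξ - kπ) = sin²(jξ)`.
-/

open Finset Complex

section Kernels

variable {K : Type*} [Field K] (z : K) (n : ℕ)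

theorem Finset.sum_Icc_neg_natCast_succ {M : Type*} [AddCommMonoid M] (f : ℤ → M) :
    ∑ m ∈ Icc (-((n + 1 : ℕ) : ℤ)) (n + 1 : ℕ), f m =
      f (-((n + 1 : ℕ) : ℤ)) + f (n + 1 : ℕ) + ∑ m ∈ Icc (-(n : ℤ)) n, f m := by
  have hIcc : Icc (-((n + 1 : ℕ) : ℤ)) (n + 1 : ℕ) =
      insert (-((n + 1 : ℕ) : ℤ)) (insert ((n + 1 : ℕ) : ℤ) (Icc (-(n : ℤ)) n)) := by
    ext m; simp only [mem_Icc, mem_insert]; omega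
  rw [hIcc, sum_insert (by simp; omega), sum_insert (by simp), add_assoc]

noncomputable def dirichletSum : K := ∑ m ∈ Icc (-(n : ℤ)) n, z ^ m

/-- At `z = exp (θ * I)` this is `n` times the Fejér kernel `F_n(θ)`. -/
noncomputable def fejerSum : K := ∑ m ∈ Icc (-(n : ℤ)) n, ((n : K) - (|m| : ℤ)) * z ^ m

theorem dirichletSum_succ :
    dirichletSum z (n + 1) = dirichletSum z n + z ^ (n + 1) + (z ^ (n + 1))⁻¹ := by
  rw [dirichletSum, sum_Icc_neg_natCast_succ, zpow_neg, zpow_natCast, dirichletSum]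
  ring

theorem fejerSum_succ : fejerSum z (n + 1) = fejerSum z n + dirichletSum z n := by
  rw [fejerSum, sum_Icc_neg_natCast_succ, fejerSum, dirichletSum, ← sum_add_distrib]
  simp only [abs_neg, Nat.abs_cast, Int.cast_natCast, sub_self, zero_mul, zero_add]
  refine sum_congr rfl fun m _ => ?_
  push_cast
  ring

theorem dirichletSum_mul_sub_one (hz : z ≠ 0) :
    dirichletSum z n * (z - 1) = z ^ (n + 1) - (z ^ n)⁻¹ := by
  induction n with
  | zero => simp [dirichletSum]
  | succ n ih =>
    rw [dirichletSum_succ, add_mul, add_mul, ih]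
    field_simp
    ring

theorem fejerSum_mul (hz : z ≠ 0) : fejerSum z n * (2 - z - z⁻¹) = 2 - z ^ n - (z ^ n)⁻¹ := by
  induction n with
  | zero => norm_num [fejerSum]
  | succ n ih =>
    have hfactor : 2 - z - z⁻¹ = -((z - 1) * (1 - z⁻¹)) := by
      field_simp
      ring
    rw [fejerSum_succ, add_mul, ih, hfactor, mul_neg, ← mul_assoc, dirichletSum_mul_sub_one z n hz]
    field_simp
    ring

theorem fejerSum_eq_sum_Icc :
    fejerSum z n = ∑ m ∈ Icc (-((n : ℤ) - 1)) (n - 1), ((n : K) - (|m| : ℤ)) * z ^ m := by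
  refine (sum_subset (Icc_subset_Icc (by omega) (by omega)) fun m hm hm' => ?_).symm
  simp only [mem_Icc] at hm hm'
  rw [show |m| = n from (abs_eq n.cast_nonneg).mpr (by omega), Int.cast_natCast, sub_self, zero_mul]

end Kernels

theorem two_sub_exp_mul_I_sub_inv (x : ℝ) :
    2 - exp (x * I) - (exp (x * I))⁻¹ = 4 * (Real.sin (x / 2) : ℂ) ^ 2 := by
  rw [← exp_neg, ← neg_mul, sub_sub, ← two_cos, Complex.ofReal_sin, Complex.sin_sq, Complex.cos_sq]
  push_cast
  ring_nf

theorem fejerSum_exp_mul_I (θ : ℝ) (n : ℕ) (hθ : Real.sin (θ / 2) ≠ 0) :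
    fejerSum (exp (θ * I)) n = ((Real.sin (n * θ / 2) / Real.sin (θ / 2)) ^ 2 : ℝ) := by
  have h := fejerSum_mul (exp (θ * I)) n (exp_ne_zero _)
  rw [← exp_nat_mul, show (n : ℂ) * (θ * I) = ((n * θ : ℝ) : ℂ) * I by push_cast; ring,
    two_sub_exp_mul_I_sub_inv, two_sub_exp_mul_I_sub_inv] at h
  have hθ' : (Real.sin (θ / 2) : ℂ) ≠ 0 := mod_cast hθ
  rw [ofReal_pow, ofReal_div]
  field_simp
  linear_combination h / 4

theorem sin_half_sub_ne_zero {j : ℕ} {ξ : ℝ} (hj : (j : ℝ) ≠ 0)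
    (h : ¬ ∃ n : ℤ, (j : ℝ) * ξ / Real.pi = n) (k : ℕ) :
    Real.sin ((ξ - Real.pi * k / j) / 2) ≠ 0 := by
  intro h0
  obtain ⟨l, hl⟩ := Real.sin_eq_zero_iff.mp h0
  refine h ⟨k + 2 * l * j, ?_⟩
  field_simp at hl ⊢
  push_cast
  linarith

theorem sin_sq_two_mul_sub_node_div_two {j : ℕ} (hj : (j : ℝ) ≠ 0) (ξ : ℝ) (k : ℕ) :
    Real.sin ((2 * j : ℕ) * (ξ - Real.pi * k / j) / 2) ^ 2 = Real.sin (j * ξ) ^ 2 := by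
  rw [show ((2 * j : ℕ) : ℝ) * (ξ - Real.pi * k / j) / 2 = j * ξ - k * Real.pi by
      push_cast; field_simp,
    Real.sin_sub_nat_mul_pi, mul_pow, ← pow_mul, Even.neg_one_pow ⟨k, by ring⟩, one_mul]

theorem stmt8_general (j : ℕ) (v : ℕ → ℝ) (ξ : ℝ)
    (h : ¬ ∃ n : ℤ, (j : ℝ) * ξ / Real.pi = n) :
    ((∑ k ∈ Finset.range (2 * j),
        v k * (Real.sin ((j : ℝ) * ξ) /
          (2 * (j : ℝ) * Real.sin ((ξ - Real.pi * k / j) / 2))) ^ 2 : ℝ) : ℂ) =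
      ∑ m ∈ Finset.Icc (-(2 * (j : ℤ) - 1)) (2 * (j : ℤ) - 1),
        (1 - ((|m| : ℤ) : ℂ) / (2 * j)) *
          ((1 / (2 * (j : ℂ))) * ∑ k ∈ Finset.range (2 * j),
            (v k : ℂ) * Complex.exp (-((m : ℂ) * (Real.pi * k / j)) * Complex.I)) *
          Complex.exp ((m : ℂ) * ξ * Complex.I) := by
  have hj : (j : ℝ) ≠ 0 := fun hj => h ⟨0, by simp [hj]⟩
  have hjC : (j : ℂ) ≠ 0 := mod_cast hj
  simp only [mul_sum, sum_mul]
  rw [sum_comm, ofReal_sum]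
  refine sum_congr rfl fun k _ => ?_
  set θ := ξ - Real.pi * k / j with hθ
  have hterm : v k * (Real.sin (j * ξ) / (2 * j * Real.sin (θ / 2))) ^ 2 =
      v k / (2 * j) ^ 2 * (Real.sin ((2 * j : ℕ) * θ / 2) / Real.sin (θ / 2)) ^ 2 := by
    rw [div_pow, div_pow, sin_sq_two_mul_sub_node_div_two hj]
    ring
  rw [hterm, ofReal_mul, ← fejerSum_exp_mul_I θ _ (sin_half_sub_ne_zero hj h k),
    fejerSum_eq_sum_Icc, mul_sum]
  push_cast
  refine sum_congr rfl fun m _ => ?_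
  have hexp : exp (m * (θ * I)) = exp (-(m * (Real.pi * k / j)) * I) * exp (m * ξ * I) := by
    rw [← exp_add, hθ]
    push_cast
    ring_nf
  rw [← exp_int_mul, hexp]
  field_simp

theorem stmt8 (j : ℕ) (hj : 1 ≤ j) (v : ℕ → ℝ) (ξ : ℝ)
    (h : ¬ ∃ n : ℤ, (j : ℝ) * ξ / Real.pi = n) :
    ((∑ k ∈ Finset.range (2 * j),
        v k * (Real.sin ((j : ℝ) * ξ) /
          (2 * (j : ℝ) * Real.sin ((ξ - Real.pi * k / j) / 2))) ^ 2 : ℝ) : ℂ) =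
      ∑ m ∈ Finset.Icc (-(2 * (j : ℤ) - 1)) (2 * (j : ℤ) - 1),
        (1 - ((|m| : ℤ) : ℂ) / (2 * j)) *
          ((1 / (2 * (j : ℂ))) * ∑ k ∈ Finset.range (2 * j),
            (v k : ℂ) * Complex.exp (-((m : ℂ) * (Real.pi * k / j)) * Complex.I)) *
          Complex.exp ((m : ℂ) * ξ * Complex.I) :=
  stmt8_general j v ξ h
end

section
/- Let j ≥ 1 be an integer, let v_0,…,v_{2j−1} be real numbers, extended 2j-periodically in the index, and define the trigonometric polynomial H(ξ) = ∑_{m=−(2j−1)}^{2j−1} (1 − |m|/(2j)) · ṽ(m) · e^{imξ}, where ṽ(m) = (1/(2j)) · ∑_{k=0}^{2j−1} v_k · e^{−i·m·πk/j}. Then for every k ∈ {0,…,2j−1}: H(πk/j) = v_k and H'(πk/j) = 0. -/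
/-!
Write `H(ξ) = (1/2j) ∑_l v_l F(ξ - ξ_l)` with the Fejér-type kernel
`F(t) = ∑_{|m|<2j} (1 - |m|/2j) e^{imt}`; then only `F` and `F'` at `t = ξ_k - ξ_l` matter,
where `z = e^{it}` is a `2j`-th root of unity. Pairing `m` with `m - 2j` and using `z^{2j} = 1`
collapses `F(t)` to the geometric sum `∑_{a<2j} z^a`, which is `2j` for `l = k` and `0` otherwise,
while in `F'(t)` the paired terms cancel.
-/

open Finset Complex
open scoped Real

theorem sum_Ioo_neg_eq_sum_range_add {M : Type*} [AddCommMonoid M] (N : ℕ) (g : ℤ → M)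
    (hg : g (-N) = 0) :
    ∑ m ∈ Ioo (-(N : ℤ)) N, g m = ∑ a ∈ range N, (g a + g (a - N)) := by
  rcases Nat.eq_zero_or_pos N with rfl | hN
  · simp
  rw [← zero_add (∑ m ∈ Ioo _ _, g m), ← hg, ← sum_insert left_notMem_Ioo,
    Ioo_insert_left (by omega), Int.Ico_eq_finset_map, sum_map,
    show (N - -(N : ℤ)).toNat = N + N by omega, sum_range_add, add_comm, ← sum_add_distrib]
  refine sum_congr rfl fun a _ => ?_
  simp only [Function.Embedding.trans_apply, Nat.castEmbedding_apply, addLeftEmbedding_apply]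
  congr 2 <;> push_cast <;> ring

theorem fejer_sum_eq_geom_sum_of_pow_eq_one {N : ℕ} {z : ℂ} (hz : z ^ N = 1) :
    ∑ m ∈ Ioo (-(N : ℤ)) N, (1 - ((|m| : ℤ) : ℂ) / N) * z ^ m = ∑ a ∈ range N, z ^ a := by
  rcases eq_or_ne N 0 with rfl | hN
  · simp
  have hz0 : z ≠ 0 := by rintro rfl; simp [hN] at hz
  have hNC : (N : ℂ) ≠ 0 := by exact_mod_cast hN
  rw [sum_Ioo_neg_eq_sum_range_add _ _ (by simp [hNC])]
  refine sum_congr rfl fun a ha => ?_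
  have ha : a < N := mem_range.mp ha
  rw [abs_of_nonneg (by omega), abs_of_neg (by omega), zpow_sub₀ hz0, zpow_natCast,
    zpow_natCast, hz]
  field_simp
  push_cast
  ring

theorem fejer_deriv_sum_eq_zero_of_pow_eq_one {N : ℕ} {z : ℂ} (hz : z ^ N = 1) :
    ∑ m ∈ Ioo (-(N : ℤ)) N, m * I * (1 - ((|m| : ℤ) : ℂ) / N) * z ^ m = 0 := by
  rcases eq_or_ne N 0 with rfl | hN
  · simp
  have hz0 : z ≠ 0 := by rintro rfl; simp [hN] at hz
  have hNC : (N : ℂ) ≠ 0 := by exact_mod_cast hN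
  rw [sum_Ioo_neg_eq_sum_range_add _ _ (by simp [hNC])]
  refine sum_eq_zero fun a ha => ?_
  have ha : a < N := mem_range.mp ha
  rw [abs_of_nonneg (by omega), abs_of_neg (by omega), zpow_sub₀ hz0, zpow_natCast,
    zpow_natCast, hz]
  field_simp
  push_cast
  ring

theorem hasDerivAt_sum_mul_mul_exp (s : Finset ℤ) (F b : ℤ → ℂ) (ξ : ℝ) :
    HasDerivAt (fun x : ℝ => ∑ m ∈ s, F m * b m * exp (m * x * I))
      (∑ m ∈ s, m * I * F m * b m * exp (m * ξ * I)) ξ := by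
  refine HasDerivAt.fun_sum fun m _ => ?_
  have := (((hasDerivAt_id ξ).ofReal_comp.const_mul (m : ℂ)).mul_const I).cexp.const_mul (F m * b m)
  exact this.congr_deriv (by simp only [id, ofReal_one, mul_one]; ring)

theorem sum_weight_mul_coeff_mul_exp (s : Finset ℤ) (F : ℤ → ℂ) (c : ℂ) (N : ℕ) (v x : ℕ → ℂ)
    (ξ : ℂ) :
    ∑ m ∈ s, F m * (c * ∑ l ∈ range N, v l * exp (-(m * x l) * I)) * exp (m * ξ * I)
      = c * ∑ l ∈ range N, v l * ∑ m ∈ s, F m * exp ((ξ - x l) * I) ^ m := by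
  simp_rw [mul_sum, sum_mul]
  rw [sum_comm]
  refine sum_congr rfl fun l _ => sum_congr rfl fun m _ => ?_
  rw [← exp_int_mul, show (m : ℂ) * ((ξ - x l) * I) = -(m * x l) * I + m * ξ * I by ring, exp_add]
  ring

theorem IsPrimitiveRoot.zpow_pow_eq_one {K : Type*} [Field K] {ω : K} {N : ℕ}
    (hω : IsPrimitiveRoot ω N) (n : ℤ) :
    (ω ^ n) ^ N = 1 := by
  rw [← zpow_natCast, ← zpow_mul, mul_comm, zpow_mul, hω.zpow_eq_one, one_zpow]

theorem IsPrimitiveRoot.sum_range_zpow_sub_pow {K : Type*} [Field K] {ω : K} {N k l : ℕ}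
    (hω : IsPrimitiveRoot ω N) (hk : k < N) (hl : l < N) :
    ∑ a ∈ range N, (ω ^ ((k : ℤ) - l)) ^ a = if l = k then (N : K) else 0 := by
  split_ifs with hlk
  · simp [hlk]
  have hne : ω ^ ((k : ℤ) - l) ≠ 1 := by
    rw [Ne, hω.zpow_eq_one_iff_dvd]
    intro hdvd
    have := Int.eq_zero_of_abs_lt_dvd hdvd (by rw [abs_lt]; omega)
    omega
  rw [geom_sum_eq hne, hω.zpow_pow_eq_one, sub_self, zero_div]

theorem exp_node_sub_mul_I (j k l : ℕ) :
    exp ((π * k / j - π * l / j) * I) = exp (2 * π * I / (2 * j : ℕ)) ^ ((k : ℤ) - l) := by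
  rw [← exp_int_mul]
  congr 1
  push_cast
  ring

theorem stmt9_general (j : ℕ) (v : ℕ → ℝ)
    (H : ℝ → ℂ)
    (hH : ∀ ξ : ℝ, H ξ =
      ∑ m ∈ Finset.Icc (-(2 * (j : ℤ) - 1)) (2 * (j : ℤ) - 1),
        (1 - ((|m| : ℤ) : ℂ) / (2 * j)) *
          ((1 / (2 * (j : ℂ))) * ∑ k ∈ Finset.range (2 * j),
            (v k : ℂ) * Complex.exp (-((m : ℂ) * (Real.pi * k / j)) * Complex.I)) *
          Complex.exp ((m : ℂ) * ξ * Complex.I)) :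
    ∀ k < 2 * j, H (Real.pi * k / j) = (v k : ℂ) ∧
      HasDerivAt H 0 (Real.pi * k / j) := by
  intro k hk
  have hω := isPrimitiveRoot_exp (2 * j) (by omega)
  have hS : Icc (-(2 * (j : ℤ) - 1)) (2 * j - 1) = Ioo (-((2 * j : ℕ) : ℤ)) (2 * j : ℕ) := by
    ext m
    simp only [mem_Icc, mem_Ioo, Nat.cast_mul, Nat.cast_ofNat]
    omega
  have hξ : ((π * k / j : ℝ) : ℂ) = π * k / j := by push_cast; rfl
  have hkernel : ∀ l ∈ range (2 * j),
      ∑ m ∈ Icc (-(2 * (j : ℤ) - 1)) (2 * j - 1),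
        (1 - ((|m| : ℤ) : ℂ) / (2 * j)) * exp ((π * k / j - π * l / j) * I) ^ m
        = if l = k then (2 * j : ℂ) else 0 := by
    intro l hl
    have := fejer_sum_eq_geom_sum_of_pow_eq_one (hω.zpow_pow_eq_one ((k : ℤ) - l))
    rw [hω.sum_range_zpow_sub_pow hk (mem_range.mp hl)] at this
    rw [hS, exp_node_sub_mul_I]
    exact_mod_cast this
  have hkernel_deriv : ∀ l : ℕ,
      ∑ m ∈ Icc (-(2 * (j : ℤ) - 1)) (2 * j - 1),
        m * I * (1 - ((|m| : ℤ) : ℂ) / (2 * j)) * exp ((π * k / j - π * l / j) * I) ^ m = 0 := by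
    intro l
    have := fejer_deriv_sum_eq_zero_of_pow_eq_one (hω.zpow_pow_eq_one ((k : ℤ) - l))
    rw [hS, exp_node_sub_mul_I]
    exact_mod_cast this
  constructor
  · rw [hH, hξ, sum_weight_mul_coeff_mul_exp _ _ _ _ _ (fun l => π * l / j),
      sum_congr rfl fun l hl => by rw [hkernel l hl]]
    have hj : (j : ℂ) ≠ 0 := by exact_mod_cast (by omega : j ≠ 0)
    simp only [mul_ite, mul_zero, sum_ite_eq', mem_range, hk, if_true]
    field_simp
  · rw [funext hH]
    refine (hasDerivAt_sum_mul_mul_exp _ _ _ _).congr_deriv ?_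
    rw [hξ, sum_weight_mul_coeff_mul_exp _ _ _ _ _ (fun l => π * l / j)]
    simp only [hkernel_deriv, mul_zero, sum_const_zero]

theorem stmt9 (j : ℕ) (hj : 1 ≤ j) (v : ℕ → ℝ)
    (hvper : ∀ k : ℕ, v (k + 2 * j) = v k)
    (H : ℝ → ℂ)
    (hH : ∀ ξ : ℝ, H ξ =
      ∑ m ∈ Finset.Icc (-(2 * (j : ℤ) - 1)) (2 * (j : ℤ) - 1),
        (1 - ((|m| : ℤ) : ℂ) / (2 * j)) *
          ((1 / (2 * (j : ℂ))) * ∑ k ∈ Finset.range (2 * j),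
            (v k : ℂ) * Complex.exp (-((m : ℂ) * (Real.pi * k / j)) * Complex.I)) *
          Complex.exp ((m : ℂ) * ξ * Complex.I)) :
    ∀ k < 2 * j, H (Real.pi * k / j) = (v k : ℂ) ∧
      HasDerivAt H 0 (Real.pi * k / j) :=
  stmt9_general j v H hH
end
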